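/- arXiv:1611.08486 — 2 statements merged into one kernel-verified Lean document; each statement's English description precedes it below -/
import Mathlib

section
/- Let H and G be groups, θ : G → Aut(H) a group action by automorphisms, and K = H ⋊_θ G the semidirect product. If φ₁ : H → ℂ is a positive-definite function that is θ-invariant (φ₁(θ_g(h)) = φ₁(h) for all g ∈ G, h ∈ H) and φ₂ : G → ℂ is positive definite, then the function φ : K → ℂ defined by φ(h, g) = φ₁(h) · φ₂(g) is positive definite on K. -/
open scoped ComplexOrder

/-- A function `φ : Γ → ℂ` on a group is positive definite if for every finite
family `γ₁, …, γ_k` the matrix `[φ(γᵢ⁻¹ γⱼ)]` is positive semidefinite. -/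
def IsPosDefFn {Γ : Type*} [Group Γ] (φ : Γ → ℂ) : Prop :=
  ∀ (k : ℕ) (γ : Fin k → Γ),
    (Matrix.of fun i j => φ ((γ i)⁻¹ * γ j)).PosSemidef

/-!
The function `(h, g) ↦ φ₁ h * φ₂ g` is the pointwise product of `φ₁ ∘ left` and `φ₂ ∘ right`.
The second factor is the pull-back of `φ₂` along the homomorphism `right`. The projection `left`
is not a homomorphism, but `((hᵢ, gᵢ)⁻¹ (hⱼ, gⱼ)).left = θ_{gᵢ⁻¹}(hᵢ⁻¹ hⱼ)`, so `θ`-invariance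
makes the Gram matrix of `φ₁ ∘ left` that of `φ₁` at the family `hᵢ`. The Schur product theorem
then shows that the product of the two is positive definite.
-/

namespace IsPosDefFn

variable {Γ Δ : Type*} [Group Γ] [Group Δ]

theorem mul {φ ψ : Γ → ℂ} (hφ : IsPosDefFn φ) (hψ : IsPosDefFn ψ) :
    IsPosDefFn (φ * ψ) := fun k γ =>
  (hφ k γ).hadamard (hψ k γ)

theorem comp_monoidHom {φ : Δ → ℂ} (hφ : IsPosDefFn φ) (f : Γ →* Δ) :
    IsPosDefFn (φ ∘ f) := fun k γ => by
  simpa only [Function.comp_apply, map_mul, map_inv] using hφ k (f ∘ γ)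

theorem comp_semidirectProduct_left {H G : Type*} [Group H] [Group G] {θ : G →* MulAut H}
    {φ : H → ℂ} (hφ : IsPosDefFn φ) (hinv : ∀ (g : G) (h : H), φ (θ g h) = φ h) :
    IsPosDefFn fun x : H ⋊[θ] G => φ x.left := fun k γ => by
  have hgram (x y : H ⋊[θ] G) : φ (x⁻¹ * y).left = φ (x.left⁻¹ * y.left) := by
    rw [SemidirectProduct.mul_left, SemidirectProduct.inv_left, SemidirectProduct.inv_right,
      ← map_mul, hinv]
  simpa only [hgram] using hφ k fun i => (γ i).left

end IsPosDefFn

/-- If `φ₁` is a `θ`-invariant positive definite function on `H` and `φ₂` is a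
positive definite function on `G`, then `(h, g) ↦ φ₁(h) φ₂(g)` is positive
definite on the semidirect product `H ⋊[θ] G`. -/
theorem posDefFn_semidirectProduct {H G : Type*} [Group H] [Group G]
    (θ : G →* MulAut H) (φ₁ : H → ℂ) (φ₂ : G → ℂ)
    (h₁ : IsPosDefFn φ₁) (hinv : ∀ (g : G) (h : H), φ₁ (θ g h) = φ₁ h)
    (h₂ : IsPosDefFn φ₂) :
    IsPosDefFn (fun k : H ⋊[θ] G => φ₁ k.left * φ₂ k.right) :=
  (h₁.comp_semidirectProduct_left hinv).mul (h₂.comp_monoidHom SemidirectProduct.rightHom)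
end

section
/- Let H and G be groups, θ : G → Aut(H) an action, and K = H ⋊_θ G. If ψ_H : H → ℝ≥0 is a θ-invariant conditionally negative definite function and ψ_G : G → ℝ≥0 is conditionally negative definite, then ψ : K → ℝ≥0 given by ψ(h, g) = ψ_H(h) + ψ_G(g) is conditionally negative definite on K. -/
/-- A function `ψ : Γ → ℝ` on a group is conditionally negative definite if
`ψ(e) = 0`, `ψ(γ⁻¹) = ψ(γ)`, and for all `γ₁, …, γ_k` and complex scalars `c`
with `∑ cᵢ = 0` one has `∑_{i,j} c̄ᵢ cⱼ ψ(γᵢ⁻¹ γⱼ) ≤ 0`. -/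
def IsCondNegDefFn {Γ : Type*} [Group Γ] (ψ : Γ → ℝ) : Prop :=
  ψ 1 = 0 ∧ (∀ γ : Γ, ψ γ⁻¹ = ψ γ) ∧
  ∀ (k : ℕ) (γ : Fin k → Γ) (c : Fin k → ℂ), (∑ i, c i) = 0 →
    (∑ i, ∑ j, (starRingEnd ℂ) (c i) * c j * (ψ ((γ i)⁻¹ * γ j) : ℂ)).re ≤ 0

/-- If `ψ_H : H → ℝ≥0` is a `θ`-invariant conditionally negative definite
function and `ψ_G : G → ℝ≥0` is conditionally negative definite, then
`(h, g) ↦ ψ_H(h) + ψ_G(g)` is a nonnegative conditionally negative definite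
function on the semidirect product `H ⋊[θ] G`. -/
theorem condNegDefFn_semidirectProduct {H G : Type*} [Group H] [Group G]
    (θ : G →* MulAut H) (ψH : H → ℝ) (ψG : G → ℝ)
    (hHnn : ∀ h, 0 ≤ ψH h) (hGnn : ∀ g, 0 ≤ ψG g)
    (hH : IsCondNegDefFn ψH) (hinv : ∀ (g : G) (h : H), ψH (θ g h) = ψH h)
    (hG : IsCondNegDefFn ψG) :
    IsCondNegDefFn (fun k : H ⋊[θ] G => ψH k.left + ψG k.right) ∧
      ∀ k : H ⋊[θ] G, 0 ≤ ψH k.left + ψG k.right := by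
  obtain ⟨hH1, hHinv, hHsum⟩ := hH
  obtain ⟨hG1, hGinv, hGsum⟩ := hG
  refine ⟨⟨?_, ?_, ?_⟩, fun k => add_nonneg (hHnn _) (hGnn _)⟩
  · simp [hH1, hG1]
  · intro k
    simp only [SemidirectProduct.inv_left, SemidirectProduct.inv_right, hinv, hHinv, hGinv]
  · intro k γ c hc
    have key : ∀ i j : Fin k,
        (ψH ((γ i)⁻¹ * γ j).left + ψG ((γ i)⁻¹ * γ j).right : ℝ)
          = ψH ((γ i).left⁻¹ * (γ j).left) + ψG ((γ i).right⁻¹ * (γ j).right) := by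
      intro i j
      have h1 : ((γ i)⁻¹ * γ j).left = θ (γ i).right⁻¹ ((γ i).left⁻¹ * (γ j).left) := by
        simp [SemidirectProduct.mul_left, SemidirectProduct.inv_left,
          SemidirectProduct.inv_right, map_mul]
      have h2 : ((γ i)⁻¹ * γ j).right = (γ i).right⁻¹ * (γ j).right := by
        simp [SemidirectProduct.mul_right, SemidirectProduct.inv_right]
      rw [h1, h2, hinv]
    have split : (∑ i, ∑ j, (starRingEnd ℂ) (c i) * c j *
          ((ψH ((γ i)⁻¹ * γ j).left + ψG ((γ i)⁻¹ * γ j).right : ℝ) : ℂ))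
        = (∑ i, ∑ j, (starRingEnd ℂ) (c i) * c j * (ψH ((γ i).left⁻¹ * (γ j).left) : ℂ))
          + (∑ i, ∑ j, (starRingEnd ℂ) (c i) * c j * (ψG ((γ i).right⁻¹ * (γ j).right) : ℂ)) := by
      rw [← Finset.sum_add_distrib]
      refine Finset.sum_congr rfl fun i _ => ?_
      rw [← Finset.sum_add_distrib]
      refine Finset.sum_congr rfl fun j _ => ?_
      rw [key]
      push_cast
      ring
    simp only [split, Complex.add_re]
    exact add_nonpos (hHsum k (fun i => (γ i).left) c hc)
      (hGsum k (fun i => (γ i).right) c hc)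
end
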